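/- arXiv:2302.00737 — 2 statements merged into one kernel-verified Lean document; each statement's English description precedes it below -/
import Mathlib

section
/- Main theorem (abstract form): for any set T of finite traces (the behaviors of the implementation), the tracker meta-configuration is nonempty on every trace of T if and only if every trace of T is exhibited by some atomic path; that is, (∀ t ∈ T, Track t ≠ ∅) ↔ (∀ t ∈ T, ∃ s', HasTrace s0 t s'). -/
/-! The tracker after `t` is exactly the set of endpoints of atomic paths exhibiting `t`:
by induction on `t` from the right, an atomic path for `t ++ [l]` splits at its last event
into a path for `t`, one `l`-step and a tail of silent steps, which is precisely how
`Track (t ++ [l])` is built from `Track t`. -/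

universe u v

/-- Atomic paths: `HasTrace step s t s'` means there is a path from `s` to `s'`
whose observable events (labels of non-silent steps) spell out `t`. -/
inductive HasTrace {State : Type u} {Label : Type v}
    (step : State → Option Label → State → Prop) : State → List Label → State → Prop
  | refl (s : State) : HasTrace step s [] s
  | silent {s s₁ s' : State} {t : List Label} :
      step s none s₁ → HasTrace step s₁ t s' → HasTrace step s t s'
  | event {s s₁ s' : State} {l : Label} {t : List Label} :
      step s (some l) s₁ → HasTrace step s₁ t s' → HasTrace step s (l :: t) s'

/-- Endpoints of atomic paths from `s0` exhibiting trace `t`. -/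
def Endpoints {State : Type u} {Label : Type v}
    (step : State → Option Label → State → Prop) (s0 : State) (t : List Label) :
    Set State :=
  { s' | HasTrace step s0 t s' }

/-- Closure of a set of states under silent (linearization) steps. -/
def silentClosure {State : Type u} {Label : Type v}
    (step : State → Option Label → State → Prop) (M : Set State) : Set State :=
  { s' | ∃ s ∈ M, Relation.ReflTransGen (fun a b => step a none b) s s' }

/-- Successors of a set of states under the observable event `l`. -/
def eventImage {State : Type u} {Label : Type v}
    (step : State → Option Label → State → Prop) (l : Label) (M : Set State) : Set State :=
  { s' | ∃ s ∈ M, step s (some l) s' }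

/-- Auxiliary: the full tracker, recursing on the reversed trace. -/
def TrackRev {State : Type u} {Label : Type v}
    (step : State → Option Label → State → Prop) (s0 : State) :
    List Label → Set State
  | [] => silentClosure step {s0}
  | l :: t => silentClosure step (eventImage step l (TrackRev step s0 t))

/-- The full tracker meta-configuration: `Track [] = silentClosure {s0}` and
`Track (t ++ [l]) = silentClosure (eventImage l (Track t))`. -/
def Track {State : Type u} {Label : Type v}
    (step : State → Option Label → State → Prop) (s0 : State) (t : List Label) :
    Set State :=
  TrackRev step s0 t.reverse

namespace HasTrace

variable {State : Type u} {Label : Type v} {step : State → Option Label → State → Prop}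
  {s m s' : State} {t t₁ t₂ : List Label} {l : Label}

theorem append (h₁ : HasTrace step s t₁ m) (h₂ : HasTrace step m t₂ s') :
    HasTrace step s (t₁ ++ t₂) s' := by
  induction h₁ with
  | refl => exact h₂
  | silent h _ ih => exact silent h (ih h₂)
  | event h _ ih => exact event h (ih h₂)

theorem of_reflTransGen (h : Relation.ReflTransGen (fun a b => step a none b) s s') :
    HasTrace step s [] s' := by
  induction h using Relation.ReflTransGen.head_induction_on with
  | refl => exact refl _
  | head h _ ih => exact silent h ih

theorem nil_iff :
    HasTrace step s [] s' ↔ Relation.ReflTransGen (fun a b => step a none b) s s' := by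
  refine ⟨fun h => ?_, of_reflTransGen⟩
  generalize hnil : ([] : List Label) = t at h
  induction h with
  | refl => exact .refl
  | silent h _ ih => exact .head h (ih hnil)
  | event => cases hnil

theorem tail_reflTransGen (h : HasTrace step s t m)
    (hm : Relation.ReflTransGen (fun a b => step a none b) m s') : HasTrace step s t s' := by
  simpa using h.append (of_reflTransGen hm)

theorem exists_of_append (h : HasTrace step s (t₁ ++ t₂) s') :
    ∃ m, HasTrace step s t₁ m ∧ HasTrace step m t₂ s' := by
  generalize happ : t₁ ++ t₂ = t at h
  induction h generalizing t₁ with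
  | refl s =>
    obtain ⟨rfl, rfl⟩ := List.append_eq_nil_iff.1 happ
    exact ⟨s, refl s, refl s⟩
  | silent h _ ih =>
    obtain ⟨m, h₁, h₂⟩ := ih happ
    exact ⟨m, silent h h₁, h₂⟩
  | @event s _ _ _ _ h h' ih =>
    cases t₁ with
    | nil =>
      rw [List.nil_append] at happ
      exact ⟨s, refl s, happ ▸ event h h'⟩
    | cons a t₁ =>
      obtain ⟨rfl, htail⟩ := List.cons.inj happ
      obtain ⟨m, h₁, h₂⟩ := ih htail
      exact ⟨m, event h h₁, h₂⟩

theorem exists_of_cons (h : HasTrace step s (l :: t) s') :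
    ∃ a b, Relation.ReflTransGen (fun a b => step a none b) s a ∧
      step a (some l) b ∧ HasTrace step b t s' := by
  generalize hcons : l :: t = t' at h
  induction h with
  | refl => cases hcons
  | silent h _ ih =>
    obtain ⟨a, b, ha, hab, hb⟩ := ih hcons
    exact ⟨a, b, .head h ha, hab, hb⟩
  | event h h' =>
    obtain ⟨rfl, rfl⟩ := List.cons.inj hcons
    exact ⟨_, _, .refl, h, h'⟩

theorem append_singleton_iff :
    HasTrace step s (t ++ [l]) s' ↔ ∃ m m', HasTrace step s t m ∧ step m (some l) m' ∧
      Relation.ReflTransGen (fun a b => step a none b) m' s' := by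
  constructor
  · intro h
    obtain ⟨m, hm, hl⟩ := h.exists_of_append
    obtain ⟨a, b, ha, hab, hb⟩ := hl.exists_of_cons
    exact ⟨a, b, hm.tail_reflTransGen ha, hab, nil_iff.1 hb⟩
  · rintro ⟨m, m', hm, hmm', hm'⟩
    exact hm.append (event hmm' (of_reflTransGen hm'))

end HasTrace

section Track

variable {State : Type u} {Label : Type v} (step : State → Option Label → State → Prop)
  (s0 : State)

theorem track_nil : Track step s0 [] = silentClosure step {s0} := rfl

theorem track_append_singleton (t : List Label) (l : Label) :
    Track step s0 (t ++ [l]) = silentClosure step (eventImage step l (Track step s0 t)) := by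
  simp [Track, TrackRev]

theorem track_eq_endpoints (t : List Label) : Track step s0 t = Endpoints step s0 t := by
  induction t using List.reverseRecOn with
  | nil =>
    ext s'
    simp [track_nil, silentClosure, Endpoints, HasTrace.nil_iff]
  | append_singleton t l ih =>
    ext s'
    simp only [track_append_singleton, ih, silentClosure, eventImage, Endpoints,
      HasTrace.append_singleton_iff, Set.mem_ofPred_eq]
    constructor
    · rintro ⟨m', ⟨m, hm, hmm'⟩, hm'⟩
      exact ⟨m, m', hm, hmm', hm'⟩
    · rintro ⟨m, m', hm, hmm', hm'⟩
      exact ⟨m', ⟨m, hm, hmm'⟩, hm'⟩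

end Track

/-- Main theorem (abstract form): the tracker is nonempty on every
trace of `T` iff every trace of `T` is exhibited by some atomic path. -/
theorem track_nonempty_iff_linearizable {State : Type u} {Label : Type v}
    (step : State → Option Label → State → Prop) (s0 : State)
    (T : Set (List Label)) :
    (∀ t ∈ T, Track step s0 t ≠ ∅) ↔ (∀ t ∈ T, ∃ s', HasTrace step s0 t s') := by
  simp only [← Set.nonempty_iff_ne_empty, track_eq_endpoints]
  rfl
end

section
/- Event step case of the main lemma (covers both the invocation and return cases): for every finite trace t and label l, the set of endpoints of atomic paths with trace t ++ [l] equals the silent closure of the l-successors of the endpoints of trace-t paths, i.e. Endpoints (t ++ [l]) = silentClosure (eventImage l (Endpoints t)). -/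
/-!
Cut a path with trace `t ++ [l]` just before its last observable step: the prefix is a
path with trace `t`, and after the `l`-step only silent steps remain.
-/

universe u v

section

variable {State : Type u} {Label : Type v} {step : State → Option Label → State → Prop}

theorem HasTrace.append_s5 {s m s' : State} {t₁ t₂ : List Label}
    (h₁ : HasTrace step s t₁ m) (h₂ : HasTrace step m t₂ s') :
    HasTrace step s (t₁ ++ t₂) s' := by
  induction h₁ with
  | refl => exact h₂
  | silent hs _ ih => exact .silent hs (ih h₂)
  | event hs _ ih => exact .event hs (ih h₂)

theorem HasTrace.exists_of_append_s5 {s s' : State} {t₁ t₂ : List Label}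
    (h : HasTrace step s (t₁ ++ t₂) s') :
    ∃ m, HasTrace step s t₁ m ∧ HasTrace step m t₂ s' := by
  generalize ht : t₁ ++ t₂ = t at h
  induction h generalizing t₁ with
  | refl s =>
    obtain ⟨rfl, rfl⟩ := List.append_eq_nil_iff.mp ht
    exact ⟨s, .refl s, .refl s⟩
  | silent hs _ ih =>
    obtain ⟨m, h₁, h₂⟩ := ih ht
    exact ⟨m, .silent hs h₁, h₂⟩
  | event hs h ih =>
    cases t₁ with
    | nil =>
      subst ht
      exact ⟨_, .refl _, .event hs h⟩
    | cons l t₁ =>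
      simp only [List.cons_append, List.cons.injEq] at ht
      obtain ⟨rfl, ht⟩ := ht
      obtain ⟨m, h₁, h₂⟩ := ih ht
      exact ⟨m, .event hs h₁, h₂⟩

theorem hasTrace_nil_iff {s s' : State} :
    HasTrace step s [] s' ↔ Relation.ReflTransGen (fun a b => step a none b) s s' := by
  constructor
  · intro h
    generalize ht : ([] : List Label) = t at h
    induction h with
    | refl => exact .refl
    | silent hs _ ih => exact .head hs (ih ht)
    | event _ _ _ => cases ht
  · intro h
    induction h using Relation.ReflTransGen.head_induction_on with
    | refl => exact .refl _
    | head hs _ ih => exact .silent hs ih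

theorem hasTrace_cons_iff {s s' : State} {l : Label} {t : List Label} :
    HasTrace step s (l :: t) s' ↔ ∃ m m', Relation.ReflTransGen (fun a b => step a none b) s m ∧
      step m (some l) m' ∧ HasTrace step m' t s' := by
  constructor
  · intro h
    generalize ht : l :: t = u at h
    induction h with
    | refl => cases ht
    | silent hs _ ih =>
      obtain ⟨m, m', hsm, hm, hm'⟩ := ih ht
      exact ⟨m, m', .head hs hsm, hm, hm'⟩
    | event hs h _ =>
      obtain ⟨rfl, rfl⟩ := List.cons_eq_cons.mp ht
      exact ⟨_, _, .refl, hs, h⟩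
  · rintro ⟨m, m', hsm, hm, hm'⟩
    exact (hasTrace_nil_iff.mpr hsm).append_s5 (.event hm hm')

end

/-- Event step case of the main lemma. -/
theorem endpoints_append_event {State : Type u} {Label : Type v}
    (step : State → Option Label → State → Prop) (s0 : State)
    (t : List Label) (l : Label) :
    Endpoints step s0 (t ++ [l]) =
      silentClosure step (eventImage step l (Endpoints step s0 t)) := by
  ext s'
  constructor
  · intro h
    obtain ⟨m, hm, hml⟩ := h.exists_of_append_s5
    obtain ⟨m₁, m₂, hmm₁, hm₁, hm₂⟩ := hasTrace_cons_iff.mp hml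
    have hm₁_end : HasTrace step s0 t m₁ := by
      simpa using hm.append_s5 (hasTrace_nil_iff.mpr hmm₁)
    exact ⟨m₂, ⟨m₁, hm₁_end, hm₁⟩, hasTrace_nil_iff.mp hm₂⟩
  · rintro ⟨m', ⟨m, hm, hmm'⟩, hm's'⟩
    exact hm.append_s5 (.event hmm' (hasTrace_nil_iff.mpr hm's'))
end
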